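/- Let s ≥ 1 and let G = (A, B, E) be a bipartite graph on n vertices total not containing 2Λ_s (two induced disjoint stars with centres in A and s leaves each). Order A = {a₁, …, a_q} with |N(a₁)| ≤ … ≤ |N(a_q)|. Then |N(a₁)| + Σ_{i=2}^{q} |N(aᵢ) △ N(a_{i−1})| + q ≤ 2sn. -/

import Mathlib

open Finset

/-- A bipartite graph contains two induced disjoint stars `2Λ_s` with centres in the top
part `A`: distinct `a, a'` with disjoint leaf sets `B₁, B₂ ⊆ B` of size `s`, where `a` is
complete to `B₁` and anticomplete to `B₂`, and `a'` vice versa. -/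
def HasTwoStars {A B : Type*} (E : A → B → Prop) (s : ℕ) : Prop :=
  ∃ (a a' : A) (B₁ B₂ : Finset B), a ≠ a' ∧ Disjoint B₁ B₂ ∧ B₁.card = s ∧ B₂.card = s ∧
    (∀ b ∈ B₁, E a b) ∧ (∀ b ∈ B₂, ¬ E a b) ∧ (∀ b ∈ B₂, E a' b) ∧ (∀ b ∈ B₁, ¬ E a' b)

open scoped symmDiff

/-! Consecutive vertices `a, a'` of the degree ordering satisfy `|N(a) \ N(a')| < s`: otherwise,
as `|N(a') \ N(a)| ≥ |N(a) \ N(a')|`, choosing `s` leaves on each side gives a `2Λ_s`. Since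
`|N(a)| + |N(a') △ N(a)| = |N(a')| + 2 |N(a) \ N(a')|`, the sum telescopes to at most
`|N(a_q)| + 2(s - 1)(q - 1) ≤ |B| + 2(s - 1)|A|`, and adding `q = |A|` stays below
`2s(|A| + |B|)`. -/

theorem Fin.add_sum_le_last_add_nsmul {M : Type*} [AddCommMonoid M] [PartialOrder M]
    [IsOrderedAddMonoid M] {q : ℕ} (c : Fin (q + 1) → M) (d : Fin q → M) (k : M)
    (h : ∀ i, c i.castSucc + d i ≤ c i.succ + k) :
    c 0 + ∑ i, d i ≤ c (Fin.last q) + q • k := by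
  induction q with
  | zero => simp
  | succ q ih =>
    have hinit : c 0 + ∑ i : Fin q, d i.castSucc ≤ c (Fin.last q).castSucc + q • k :=
      ih (fun i => c i.castSucc) (fun i => d i.castSucc) fun i => h i.castSucc
    calc c 0 + ∑ i, d i
        = (c 0 + ∑ i : Fin q, d i.castSucc) + d (Fin.last q) := by
          rw [Fin.sum_univ_castSucc]; exact (add_assoc _ _ _).symm
      _ ≤ (c (Fin.last q).castSucc + d (Fin.last q)) + q • k := by
          grw [hinit, add_right_comm]
      _ ≤ c (Fin.last (q + 1)) + (q + 1) • k := by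
          grw [h (Fin.last q), succ_nsmul, add_assoc, add_comm k]; rfl

theorem Finset.card_add_card_symmDiff {α : Type*} [DecidableEq α] (s t : Finset α) :
    #s + #(t ∆ s) = #t + 2 * #(s \ t) := by
  rw [symmDiff_def, sup_eq_union, card_union_of_disjoint disjoint_sdiff_sdiff]
  grind

section TwoStars

variable {A B : Type*} [Fintype B] (E : A → B → Prop) [∀ a b, Decidable (E a b)]

def nbhd (a : A) : Finset B := univ.filter (E a)

variable {E} [DecidableEq B] {s : ℕ}

theorem hasTwoStars_of_le_card_sdiff {a a' : A} (hne : a ≠ a')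
    (h : s ≤ #(nbhd E a \ nbhd E a')) (h' : s ≤ #(nbhd E a' \ nbhd E a)) :
    HasTwoStars E s := by
  obtain ⟨B₁, hB₁, hcard₁⟩ := exists_subset_card_eq h
  obtain ⟨B₂, hB₂, hcard₂⟩ := exists_subset_card_eq h'
  have mem₁ : ∀ b ∈ B₁, E a b ∧ ¬ E a' b := fun b hb => by simpa [nbhd] using hB₁ hb
  have mem₂ : ∀ b ∈ B₂, E a' b ∧ ¬ E a b := fun b hb => by simpa [nbhd] using hB₂ hb
  exact ⟨a, a', B₁, B₂, hne, disjoint_left.2 fun b hb₁ hb₂ => (mem₂ b hb₂).2 (mem₁ b hb₁).1,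
    hcard₁, hcard₂, fun b hb => (mem₁ b hb).1, fun b hb => (mem₂ b hb).2,
    fun b hb => (mem₂ b hb).1, fun b hb => (mem₁ b hb).2⟩

theorem card_sdiff_lt_of_not_hasTwoStars (hfree : ¬ HasTwoStars E s) {a a' : A} (hne : a ≠ a')
    (hle : #(nbhd E a) ≤ #(nbhd E a')) : #(nbhd E a \ nbhd E a') < s := by
  by_contra! hs
  exact hfree <| hasTwoStars_of_le_card_sdiff hne hs <|
    hs.trans (card_sdiff_le_card_sdiff_iff.2 hle)

theorem card_add_card_symmDiff_le_of_not_hasTwoStars (hfree : ¬ HasTwoStars E s) {a a' : A}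
    (hne : a ≠ a') (hle : #(nbhd E a) ≤ #(nbhd E a')) :
    #(nbhd E a) + #(nbhd E a' ∆ nbhd E a) ≤ #(nbhd E a') + 2 * (s - 1) := by
  have := card_sdiff_lt_of_not_hasTwoStars hfree hne hle
  rw [card_add_card_symmDiff]
  omega

end TwoStars

/-- In a `2Λ_s`-free bipartite graph on `n` vertices with `A = {a₁, …, a_{q+1}}` ordered by
nondecreasing degree, the encoding length
`|N(a₁)| + Σᵢ |N(aᵢ₊₁) △ N(aᵢ)| + (q+1)` is at most `2sn`. -/
theorem twostars_free_encoding_length {A B : Type*} [Fintype A] [Fintype B] [DecidableEq B]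
    (E : A → B → Prop) [∀ a b, Decidable (E a b)] (s n : ℕ) (hs : 1 ≤ s)
    (hfree : ¬ HasTwoStars E s) (hn : Fintype.card A + Fintype.card B = n)
    (q : ℕ) (a : Fin (q + 1) → A) (hbij : Function.Bijective a)
    (hmono : ∀ i j : Fin (q + 1), i ≤ j →
      (univ.filter (fun b => E (a i) b)).card ≤ (univ.filter (fun b => E (a j) b)).card) :
    (univ.filter (fun b => E (a 0) b)).card +
      (∑ i : Fin q,
        (((univ.filter (fun b => E (a i.succ) b)) \ (univ.filter (fun b => E (a i.castSucc) b))) ∪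
          ((univ.filter (fun b => E (a i.castSucc) b)) \ (univ.filter (fun b => E (a i.succ) b)))).card) +
      (q + 1) ≤ 2 * s * n := by
  change #(nbhd E (a 0)) + ∑ i : Fin q, #(nbhd E (a i.succ) ∆ nbhd E (a i.castSucc)) + (q + 1)
    ≤ 2 * s * n
  have hsum := Fin.add_sum_le_last_add_nsmul (fun i => #(nbhd E (a i))) _ (2 * (s - 1))
    fun i => card_add_card_symmDiff_le_of_not_hasTwoStars hfree
      (hbij.injective.ne Fin.castSucc_lt_succ.ne) (hmono _ _ Fin.castSucc_lt_succ.le)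
  have hlast : #(nbhd E (a (Fin.last q))) ≤ Fintype.card B := card_le_univ _
  have hA : q + 1 ≤ Fintype.card A := by simpa using Fintype.card_le_of_injective a hbij.injective
  simp only [smul_eq_mul] at hsum
  obtain ⟨t, rfl⟩ : ∃ t, s = t + 1 := ⟨s - 1, by omega⟩
  subst hn
  simp only [add_tsub_cancel_right] at hsum
  nlinarith
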